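/- arXiv:2204.07345 — 5 statements merged into one kernel-verified Lean document; each statement's English description precedes it below -/
import Mathlib

section
/- Let p be an odd prime and r ≥ 1. If a sequence S = (x_1,…,x_k) in Z_{p^r} has at least two terms that are units of Z_{p^r} (i.e., coprime to p), then S is a U(p^r)-weighted zero-sum sequence; that is, there exist units a_1,…,a_k of Z_{p^r} with ∑_{i=1}^k a_i x_i = 0. -/
open Classical in
/-- The number of terms of the sequence `S` satisfying the predicate `P`. -/
noncomputable def pcount {α : Type*} (P : α → Prop) (S : List α) : ℕ :=
  S.countP fun x => decide (P x)

/-- `S` is an `A`-weighted zero-sum sequence in `ZMod n`: there are weights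
`a i ∈ A` with `∑ a i * x i = 0`. -/
def IsWZSum {n : ℕ} (A : Set (ZMod n)) (S : List (ZMod n)) : Prop :=
  ∃ w : List (ZMod n), w.length = S.length ∧ (∀ a ∈ w, a ∈ A) ∧
    (List.zipWith (· * ·) w S).sum = 0

/-- `S` has an `A`-weighted zero-sum subsequence of length `t ≥ 1`. -/
def HasWZSS {n : ℕ} (A : Set (ZMod n)) (S : List (ZMod n)) (t : ℕ) : Prop :=
  0 < t ∧ ∃ T : List (ZMod n), T.Sublist S ∧ T.length = t ∧ IsWZSum A T

/-- `S` has a nonempty `A`-weighted zero-sum subsequence. -/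
def HasWZS {n : ℕ} (A : Set (ZMod n)) (S : List (ZMod n)) : Prop :=
  ∃ T : List (ZMod n), T.Sublist S ∧ T ≠ [] ∧ IsWZSum A T

/-- The `A`-weighted Davenport constant `D_A(n)`: the least `k > 0` such that every
sequence of length `k` in `ZMod n` has a nonempty `A`-weighted zero-sum subsequence. -/
noncomputable def DavC (n : ℕ) (A : Set (ZMod n)) : ℕ :=
  sInf {k | 0 < k ∧ ∀ S : List (ZMod n), S.length = k → HasWZS A S}

/-- The `A`-weighted Gao constant `E_A(n)`: the least `k > 0` such that every
sequence of length `k` in `ZMod n` has an `A`-weighted zero-sum subsequence of length `n`. -/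
noncomputable def GaoC (n : ℕ) (A : Set (ZMod n)) : ℕ :=
  sInf {k | 0 < k ∧ ∀ S : List (ZMod n), S.length = k → HasWZSS A S n}

/-- The set of units of `ZMod n`. -/
def U (n : ℕ) : Set (ZMod n) := {x | IsUnit x}

/-- An `A`-extremal sequence for the Gao constant: a sequence of length `E_A(n) - 1`
with no `A`-weighted zero-sum subsequence of length `n`. -/
def IsGaoExtremal (n : ℕ) (A : Set (ZMod n)) (S : List (ZMod n)) : Prop :=
  S.length = GaoC n A - 1 ∧ ¬ HasWZSS A S n

/-- `S` and `T` are `A`-equivalent: there are a unit `c`, weights `a i ∈ A` and a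
permutation matching the multiset of terms `c * y j` with the multiset `a i * x i`. -/
def AEquiv {n : ℕ} (A : Set (ZMod n)) (S T : List (ZMod n)) : Prop :=
  ∃ c : ZMod n, IsUnit c ∧ ∃ w : List (ZMod n), w.length = S.length ∧
    (∀ a ∈ w, a ∈ A) ∧ (T.map fun y => c * y).Perm (List.zipWith (· * ·) w S)

/-!
In a local ring in which `2` is a unit, every `t` is a unit-weighted sum of a sequence with two
unit terms `x` and `u`: weight the other terms by `1` and `x` by `b ∈ {1, 2}`; then `u` must get
the weight `(c - b * x) / u` for a fixed `c`. The candidates `c - x` and `c - 2 * x` differ by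
the unit `x`, so one of them is a unit. `ZMod (p ^ r)` is local as a quotient of `ℤ_[p]`, and
`2` is a unit there because `p` is odd.
-/

open Classical in
theorem pcount_cons {α : Type*} (P : α → Prop) (x : α) (S : List α) :
    pcount P (x :: S) = pcount P S + if P x then 1 else 0 := by
  simp only [pcount, List.countP_cons, decide_eq_true_eq]

theorem exists_mem_of_pcount_pos {α : Type*} {P : α → Prop} {S : List α}
    (h : 0 < pcount P S) : ∃ x ∈ S, P x := by
  simpa [pcount, List.countP_pos_iff] using h

section UnitWeightedSum

variable {R : Type*} [CommRing R]

def IsUnitWeightedSum (S : List R) (t : R) : Prop :=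
  ∃ w : List R, w.length = S.length ∧ (∀ a ∈ w, IsUnit a) ∧ (List.zipWith (· * ·) w S).sum = t

theorem IsUnitWeightedSum.cons {S : List R} {t a : R} (h : IsUnitWeightedSum S t)
    (ha : IsUnit a) (x : R) : IsUnitWeightedSum (x :: S) (a * x + t) := by
  obtain ⟨w, hlen, hw, hsum⟩ := h
  refine ⟨a :: w, by simp [hlen], ?_, by simp [hsum]⟩
  simp only [List.mem_cons]
  rintro b (rfl | hb)
  exacts [ha, hw b hb]

theorem isUnitWeightedSum_sum (S : List R) : IsUnitWeightedSum S S.sum := by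
  induction S with
  | nil => exact ⟨[], rfl, by simp, rfl⟩
  | cons x S ih => simpa using ih.cons isUnit_one x

theorem isUnitWeightedSum_of_mem {S : List R} {u t : R} (hu : IsUnit u) (huS : u ∈ S)
    (ht : IsUnit (t - (S.sum - u))) : IsUnitWeightedSum S t := by
  induction S generalizing t with
  | nil => simp at huS
  | cons y S ih =>
    rcases List.mem_cons.mp huS with rfl | huS
    · obtain ⟨v, rfl⟩ := hu
      have hrest : IsUnit (t - S.sum) := by simpa using ht
      convert (isUnitWeightedSum_sum S).cons (hrest.mul v⁻¹.isUnit) v using 1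
      simp [mul_assoc]
    · have hrest : IsUnitWeightedSum S (t - y) :=
        ih huS (by convert ht using 1; rw [List.sum_cons]; ring)
      simpa using hrest.cons isUnit_one y

theorem IsLocalRing.exists_isUnit_and_isUnit_sub_mul [IsLocalRing R] (h2 : IsUnit (2 : R))
    {x : R} (hx : IsUnit x) (c : R) : ∃ b : R, IsUnit b ∧ IsUnit (c - b * x) := by
  have hdiff : IsUnit ((c - 1 * x) + -(c - 2 * x)) := by convert hx using 1; ring
  rcases isUnit_or_isUnit_of_isUnit_add hdiff with h | h
  · exact ⟨1, isUnit_one, h⟩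
  · exact ⟨2, h2, (IsUnit.neg_iff _).mp h⟩

theorem isUnitWeightedSum_of_two_le_pcount [IsLocalRing R] (h2 : IsUnit (2 : R))
    {S : List R} (hS : 2 ≤ pcount (fun x => IsUnit x) S) (t : R) : IsUnitWeightedSum S t := by
  induction S generalizing t with
  | nil => simp [pcount] at hS
  | cons x S ih =>
    rw [pcount_cons] at hS
    by_cases hS2 : 2 ≤ pcount (fun x => IsUnit x) S
    · simpa using (ih hS2 (t - x)).cons isUnit_one x
    have hx : IsUnit x := by
      by_contra hx
      rw [if_neg hx] at hS
      exact hS2 hS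
    rw [if_pos hx] at hS
    obtain ⟨u, huS, hu⟩ := exists_mem_of_pcount_pos (by omega : 0 < pcount (fun x => IsUnit x) S)
    obtain ⟨b, hb, hcb⟩ := IsLocalRing.exists_isUnit_and_isUnit_sub_mul h2 hx (t - (S.sum - u))
    have hrest : IsUnitWeightedSum S (t - b * x) :=
      isUnitWeightedSum_of_mem hu huS (by convert hcb using 1; ring)
    simpa using hrest.cons hb x

end UnitWeightedSum

theorem ZMod.isLocalRing_prime_pow {p r : ℕ} [Fact p.Prime] (hr : 1 ≤ r) :
    IsLocalRing (ZMod (p ^ r)) :=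
  have : Fact (1 < p ^ r) := ⟨Nat.one_lt_pow (by omega) (Fact.out : p.Prime).one_lt⟩
  IsLocalRing.of_surjective (PadicInt.toZModPow r) (ZMod.ringHom_surjective _)

theorem ZMod.isUnit_two_prime_pow {p r : ℕ} (hp : p.Prime) (hpodd : p ≠ 2) (hr : 1 ≤ r) :
    IsUnit (2 : ZMod (p ^ r)) := by
  have := (ZMod.isUnit_natCast_iff_not_dvd_pow (a := 2) hp hr).mpr
    fun h => hpodd ((Nat.prime_dvd_prime_iff_eq hp Nat.prime_two).mp h)
  exact_mod_cast this

/-- If a sequence over `ZMod (p ^ r)`, `p` an odd prime, has at least two unit terms,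
then it is a `U(p^r)`-weighted zero-sum sequence. -/
theorem wzsum_of_two_units (p r : ℕ) (hp : p.Prime) (hpodd : p ≠ 2) (hr : 1 ≤ r)
    (S : List (ZMod (p ^ r)))
    (h2 : 2 ≤ pcount (fun x => IsUnit x) S) :
    IsWZSum (U (p ^ r)) S := by
  have : Fact p.Prime := ⟨hp⟩
  have := ZMod.isLocalRing_prime_pow (p := p) hr
  exact isUnitWeightedSum_of_two_le_pcount (ZMod.isUnit_two_prime_pow hp hpodd hr) h2 0
end

section
/- Let S = (x_1,…,x_k) be a sequence in Z_n, let d be a proper divisor of n such that for each i there is an integer X_i with X_i ≡ x_i (mod n) and d | X_i, and let n' = n/d. For 1 ≤ i ≤ k let x_i' = (X_i/d) mod n' ∈ Z_{n'}. Let A ⊆ Z_n, let f : Z_n → Z_{n'} be the natural reduction map, and let A' ⊆ f(A). If the sequence S' = (x_1',…,x_k') is an A'-weighted zero-sum sequence in Z_{n'}, then S is an A-weighted zero-sum sequence in Z_n. -/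
lemma zipWith_ofFn' {α β γ : Type*} {k : ℕ} (f : α → β → γ) (g : Fin k → α) (h : Fin k → β) :
    List.zipWith f (List.ofFn g) (List.ofFn h) = List.ofFn (fun i => f (g i) (h i)) := by
  apply List.ext_getElem
  · simp
  · intro i h1 h2
    simp

/-- Lifting lemma: if every term of `S` is (the class of) an integer divisible by a proper
divisor `d` of `n`, and the sequence of quotients is an `A'`-weighted zero-sum sequence in
`ZMod (n / d)` for some `A'` contained in the image of `A`, then `S` is an `A`-weighted
zero-sum sequence in `ZMod n`. -/
theorem wzsum_of_lift (n d k : ℕ) (hn : 0 < n) (hdvd : d ∣ n) (hd : d < n)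
    (X : Fin k → ℤ) (hX : ∀ i, (d : ℤ) ∣ X i)
    (A : Set (ZMod n)) (A' : Set (ZMod (n / d)))
    (hA' : A' ⊆ (ZMod.castHom (Nat.div_dvd_of_dvd hdvd) (ZMod (n / d))) '' A)
    (h : IsWZSum A' (List.ofFn fun i => ((X i / (d : ℤ) : ℤ) : ZMod (n / d)))) :
    IsWZSum A (List.ofFn fun i => ((X i : ℤ) : ZMod n)) := by
  obtain ⟨w, hlen, hmem, hsum⟩ := h
  have hk : w.length = k := by simpa using hlen
  subst hk
  have hd0 : 0 < d := by
    rcases Nat.eq_zero_or_pos d with rfl | h; · simp at hdvd; omega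
    · exact h
  have hn'0 : 0 < n / d := Nat.div_pos (Nat.le_of_dvd hn hdvd) hd0
  haveI : NeZero n := ⟨hn.ne'⟩
  haveI : NeZero (n / d) := ⟨hn'0.ne'⟩
  have hchoice : ∀ i : Fin w.length, ∃ a : ZMod n, a ∈ A ∧
      (ZMod.castHom (Nat.div_dvd_of_dvd hdvd) (ZMod (n / d))) a = w.get i := by
    intro i
    have hmemA' : w.get i ∈ A' := by
      refine hmem _ ?_
      rw [List.get_eq_getElem]
      exact List.getElem_mem _
    obtain ⟨a, ha, hae⟩ := hA' hmemA'
    exact ⟨a, ha, hae⟩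
  choose a ha hae using hchoice
  refine ⟨List.ofFn a, by simp, ?_, ?_⟩
  · intro b hb
    rw [List.mem_ofFn] at hb
    obtain ⟨i, rfl⟩ := hb
    exact ha i
  rw [zipWith_ofFn', List.sum_ofFn]
  set B : Fin w.length → ℤ := fun i => ((a i).val : ℤ) with hB
  have hBn : ∀ i, ((B i : ℤ) : ZMod n) = a i := by
    intro i
    simp [hB, ZMod.natCast_val, ZMod.cast_id]
  have hBn' : ∀ i, ((B i : ℤ) : ZMod (n / d)) = w.get i := by
    intro i
    rw [← hae i]
    simp [hB, ZMod.castHom_apply, ZMod.natCast_val]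
  -- rewrite the hypothesis sum
  have hw : List.zipWith (· * ·) w (List.ofFn fun i => ((X i / (d : ℤ) : ℤ) : ZMod (n / d)))
      = List.ofFn fun i => w.get i * ((X i / (d : ℤ) : ℤ) : ZMod (n / d)) := by
    apply List.ext_getElem
    · simp
    · intro i h1 h2
      simp
  rw [hw, List.sum_ofFn] at hsum
  have hsum2 : ((∑ i, B i * (X i / (d : ℤ)) : ℤ) : ZMod (n / d)) = 0 := by
    push_cast
    rw [← hsum]
    exact Finset.sum_congr rfl fun i _ => by rw [hBn' i]
  have hdvd' : ((n / d : ℕ) : ℤ) ∣ ∑ i, B i * (X i / (d : ℤ)) :=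
    (ZMod.intCast_zmod_eq_zero_iff_dvd _ _).mp hsum2
  have hXeq : ∀ i, X i = (d : ℤ) * (X i / (d : ℤ)) := fun i =>
    (Int.mul_ediv_cancel' (hX i)).symm
  have hndvd : ((n : ℕ) : ℤ) ∣ ∑ i, B i * X i := by
    have hnd : (n : ℤ) = (d : ℤ) * ((n / d : ℕ) : ℤ) := by
      rw [← Nat.cast_mul, Nat.mul_div_cancel' hdvd]
    obtain ⟨m, hm⟩ := hdvd'
    have : ∑ i, B i * X i = (d : ℤ) * ∑ i, B i * (X i / (d : ℤ)) := by
      rw [Finset.mul_sum]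
      refine Finset.sum_congr rfl fun i _ => ?_
      conv_lhs => rw [hXeq i]
      ring
    rw [this, hm, hnd]
    ring_nf
    exact Dvd.intro m rfl
  have hfin : ((∑ i, B i * X i : ℤ) : ZMod n) = 0 :=
    (ZMod.intCast_zmod_eq_zero_iff_dvd _ _).mpr hndvd
  calc ∑ i, a i * ((X i : ℤ) : ZMod n)
      = ((∑ i, B i * X i : ℤ) : ZMod n) := by
        push_cast
        exact Finset.sum_congr rfl fun i _ => by rw [hBn i]
    _ = 0 := hfin
end

section
/- Let n = 2^r with r ≥ 2. A sequence in Z_n is a U(n)-extremal sequence for the Gao constant if and only if it is U(n)-equivalent to a sequence S of length n + r − 1 such that: for each i with 0 ≤ i ≤ r − 2, the element 2^i occurs exactly once as a term of S; the element 2^{r−1} occurs an odd number of times as a term of S; and all remaining terms of S are zero. -/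
/-!
Write `ν(x)` for the 2-adic valuation of `x ∈ ℤ/2^rℤ`, with `ν(0) = r`. Two elements are unit
multiples of each other iff they have the same valuation, so unit-weighted zero sums only see
the multiset of valuations. A sequence has a unit-weighted zero sum iff the least valuation
`v < r` occurring in it (if any) occurs an even number of times: reducing modulo `2 ^ (v + 1)`
gives necessity, and changing one weight gives sufficiency. Counting valuations then shows that a
sequence of length `n + r` always has a unit-weighted zero-sum subsequence of length `n = 2 ^ r`,
while one of length `n + r - 1` avoids it iff each valuation `i ≤ r - 2` occurs once and
valuation `r - 1` an odd number of times; hence `E(n) = n + r`, and each such sequence is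
equivalent to the one obtained by replacing every term `x` by `2 ^ ν(x)`.
-/

open List

namespace ZMod

variable {r : ℕ}

lemma two_pow_eq_zero : (2 : ZMod (2 ^ r)) ^ r = 0 := by
  exact_mod_cast natCast_self (2 ^ r)

lemma two_pow_ne_zero {i : ℕ} (hi : i < r) : (2 : ZMod (2 ^ r)) ^ i ≠ 0 := by
  have h := (natCast_eq_zero_iff (2 ^ i) (2 ^ r)).not.2
    (mt (Nat.pow_dvd_pow_iff_le_right (by norm_num)).1 (by omega))
  exact_mod_cast h

lemma isUnit_one_add_two_mul (t : ZMod (2 ^ r)) : IsUnit (1 + 2 * t) :=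
  (Commute.all 2 t).isNilpotent_mul_right ⟨r, two_pow_eq_zero⟩ |>.isUnit_one_add

lemma isUnit_iff_odd_val (hr : r ≠ 0) {x : ZMod (2 ^ r)} : IsUnit x ↔ Odd x.val := by
  rw [← natCast_zmod_val x, isUnit_iff_coprime, val_natCast_of_lt (val_lt x),
    Nat.coprime_pow_right_iff (Nat.pos_of_ne_zero hr), Nat.coprime_two_right]

lemma isUnit_of_not_two_dvd (hr : r ≠ 0) {x : ZMod (2 ^ r)} (hx : ¬ 2 ∣ x) : IsUnit x := by
  refine (isUnit_iff_odd_val hr).2 (Nat.not_even_iff_odd.1 fun ⟨k, hk⟩ => hx ⟨k, ?_⟩)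
  rw [← natCast_zmod_val x, hk]
  push_cast
  ring

lemma two_pow_mul_of_isUnit {v : ℕ} {u : ZMod (2 ^ (v + 1))} (hu : IsUnit u) :
    2 ^ v * u = 2 ^ v := by
  obtain ⟨k, hk⟩ := (isUnit_iff_odd_val v.succ_ne_zero).1 hu
  rw [← natCast_zmod_val u, hk]
  push_cast
  linear_combination (k : ZMod (2 ^ (v + 1))) * two_pow_eq_zero

noncomputable def nu (r : ℕ) (x : ZMod (2 ^ r)) : ℕ :=
  if x = 0 then r else multiplicity 2 x

@[simp] lemma nu_zero : nu r 0 = r := if_pos rfl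

lemma two_pow_dvd_iff_le_nu {v : ℕ} (hv : v ≤ r) {x : ZMod (2 ^ r)} :
    (2 : ZMod (2 ^ r)) ^ v ∣ x ↔ v ≤ nu r x := by
  by_cases hx : x = 0
  · simp [hx, hv]
  have hfin : FiniteMultiplicity (2 : ZMod (2 ^ r)) x :=
    ⟨r, fun h => hx (zero_dvd_iff.1 (by simpa [pow_succ, two_pow_eq_zero] using h))⟩
  rw [nu, if_neg hx, hfin.pow_dvd_iff_le_multiplicity]

lemma nu_le (x : ZMod (2 ^ r)) : nu r x ≤ r := by
  unfold nu
  split_ifs with hx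
  · exact le_rfl
  by_contra! h
  exact hx (zero_dvd_iff.1 (two_pow_eq_zero (r := r) ▸
    (pow_dvd_pow 2 h.le).trans (pow_multiplicity_dvd 2 x)))

lemma nu_lt_of_ne_zero {x : ZMod (2 ^ r)} (hx : x ≠ 0) : nu r x < r := by
  refine (nu_le x).lt_of_ne fun h => hx ?_
  simpa [two_pow_eq_zero] using (two_pow_dvd_iff_le_nu le_rfl).2 h.ge

lemma nu_eq_nu_of_dvd_iff {x y : ZMod (2 ^ r)}
    (h : ∀ v ≤ r, (2 : ZMod (2 ^ r)) ^ v ∣ x ↔ (2 : ZMod (2 ^ r)) ^ v ∣ y) :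
    nu r x = nu r y := by
  have hx := (two_pow_dvd_iff_le_nu (nu_le x)).2 le_rfl
  have hy := (two_pow_dvd_iff_le_nu (nu_le y)).2 le_rfl
  exact le_antisymm ((two_pow_dvd_iff_le_nu (nu_le x)).1 ((h _ (nu_le x)).1 hx))
    ((two_pow_dvd_iff_le_nu (nu_le y)).1 ((h _ (nu_le y)).2 hy))

lemma nu_mul_of_isUnit {a : ZMod (2 ^ r)} (ha : IsUnit a) (x : ZMod (2 ^ r)) :
    nu r (a * x) = nu r x :=
  nu_eq_nu_of_dvd_iff fun _ _ => ha.dvd_mul_left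

lemma nu_two_pow {i : ℕ} (hi : i ≤ r) : nu r ((2 : ZMod (2 ^ r)) ^ i) = i := by
  rcases hi.eq_or_lt with rfl | hi
  · rw [two_pow_eq_zero, nu_zero]
  refine le_antisymm (not_lt.1 fun h => ?_) ((two_pow_dvd_iff_le_nu hi.le).1 dvd_rfl)
  obtain ⟨y, hy⟩ := (two_pow_dvd_iff_le_nu (v := i + 1) hi).2 h
  refine two_pow_ne_zero hi ((isUnit_one_add_two_mul (-y)).mul_left_eq_zero.1 ?_)
  linear_combination hy

lemma exists_isUnit_mul_eq_two_pow_nu (hr : r ≠ 0) (x : ZMod (2 ^ r)) :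
    ∃ a, IsUnit a ∧ a * x = 2 ^ nu r x := by
  by_cases hx : x = 0
  · exact ⟨1, isUnit_one, by simp [hx, two_pow_eq_zero]⟩
  obtain ⟨y, hy⟩ := (two_pow_dvd_iff_le_nu (nu_le x)).2 le_rfl
  have hyu : IsUnit y := isUnit_of_not_two_dvd hr fun ⟨z, hz⟩ => by
    have := (two_pow_dvd_iff_le_nu (v := nu r x + 1) (nu_lt_of_ne_zero hx)).1
      ⟨z, hy.trans (by rw [hz, pow_succ, mul_assoc])⟩
    omega
  obtain ⟨u, rfl⟩ := hyu
  refine ⟨↑u⁻¹, Units.isUnit _, ?_⟩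
  conv_lhs => rw [hy]
  rw [mul_left_comm, Units.inv_mul, mul_one]

lemma nu_eq_nu_iff (hr : r ≠ 0) {x y : ZMod (2 ^ r)} :
    nu r x = nu r y ↔ ∃ a, IsUnit a ∧ a * x = y := by
  refine ⟨fun h => ?_, fun ⟨a, ha, hy⟩ => hy ▸ (nu_mul_of_isUnit ha x).symm⟩
  obtain ⟨a, ha, hax⟩ := exists_isUnit_mul_eq_two_pow_nu hr x
  obtain ⟨b, ⟨b, rfl⟩, hby⟩ := exists_isUnit_mul_eq_two_pow_nu hr y
  refine ⟨↑b⁻¹ * a, (Units.isUnit _).mul ha, ?_⟩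
  rw [mul_assoc, hax, h, ← hby, Units.inv_mul_cancel_left]

lemma even_count_nu_of_sum_eq_zero {v : ℕ} (hv : v < r) {Y : List (ZMod (2 ^ r))}
    (hY : ∀ y ∈ Y, v ≤ nu r y) (hsum : Y.sum = 0) : Even ((Y.map (nu r)).count v) := by
  -- Modulo `2 ^ (v + 1)`, terms of valuation `v` become `2 ^ v` and the others vanish.
  let f := castHom (pow_dvd_pow 2 hv : 2 ^ (v + 1) ∣ 2 ^ r) (ZMod (2 ^ (v + 1)))
  have hf : ∀ y ∈ Y, f y = if nu r y = v then 2 ^ v else 0 := fun y hy => by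
    split_ifs with h
    · obtain ⟨a, ha, rfl⟩ := (nu_eq_nu_iff (by omega)).1 ((nu_two_pow hv.le).trans h.symm)
      rw [map_mul, map_pow, map_ofNat, mul_comm, two_pow_mul_of_isUnit (ha.map f)]
    · have hlt : v + 1 ≤ nu r y := by have := hY y hy; omega
      obtain ⟨z, rfl⟩ := (two_pow_dvd_iff_le_nu hv).2 hlt
      rw [map_mul, map_pow, map_ofNat, two_pow_eq_zero, zero_mul]
  have key : (((Y.map (nu r)).count v * 2 ^ v : ℕ) : ZMod (2 ^ (v + 1))) = 0 := by
    calc _ = ((Y.map (nu r)).map fun m => if m = v then (2 : ZMod (2 ^ (v + 1))) ^ v else 0).sum :=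
          by
          rw [List.sum_map_eq_nsmul_single v _ fun m hm _ => if_neg hm]
          simp
      _ = (Y.map f).sum := by
          rw [List.map_map]
          exact congrArg _ (List.map_congr_left fun y hy => (hf y hy).symm)
      _ = 0 := by rw [← map_list_sum, hsum, map_zero]
  rw [natCast_eq_zero_iff, pow_succ, mul_comm (2 ^ v),
    Nat.mul_dvd_mul_iff_right (by positivity)] at key
  exact even_iff_two_dvd.2 key

lemma map_nu_map_two_pow {V : List ℕ} (hV : ∀ x ∈ V, x ≤ r) :
    (V.map ((2 : ZMod (2 ^ r)) ^ ·)).map (nu r) = V := by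
  rw [List.map_map]
  exact (List.map_congr_left fun x hx => nu_two_pow (hV x hx)).trans (List.map_id' V)

lemma map_nu_map_two_pow_nu (S : List (ZMod (2 ^ r))) :
    (S.map fun x => (2 : ZMod (2 ^ r)) ^ nu r x).map (nu r) = S.map (nu r) := by
  rw [List.map_map]
  exact List.map_congr_left fun x _ => nu_two_pow (nu_le x)

lemma map_nu_eq_map_nu_iff (hr : r ≠ 0) {Y T : List (ZMod (2 ^ r))} :
    Y.map (nu r) = T.map (nu r) ↔ ∃ w : List (ZMod (2 ^ r)), w.length = T.length ∧
      (∀ a ∈ w, IsUnit a) ∧ List.zipWith (· * ·) w T = Y := by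
  induction T generalizing Y with
  | nil =>
    simp only [List.map_nil, List.map_eq_nil_iff, List.length_nil, List.length_eq_zero_iff,
      List.zipWith_nil_right]
    exact ⟨fun h => ⟨[], rfl, by simp, h.symm⟩, fun ⟨_, _, _, h⟩ => h.symm⟩
  | cons x T ih =>
    constructor
    · intro h
      obtain ⟨y, Y, rfl⟩ :=
        List.exists_cons_of_length_eq_add_one (by simpa using congrArg List.length h)
      obtain ⟨hxy, hYT⟩ := List.cons.inj h
      obtain ⟨a, ha, rfl⟩ := (nu_eq_nu_iff hr).1 hxy.symm
      obtain ⟨w, hw, hwU, rfl⟩ := ih.1 hYT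
      exact ⟨a :: w, by simp [hw], by simpa using ⟨ha, hwU⟩, rfl⟩
    · rintro ⟨_ | ⟨a, w⟩, hw, hwU, rfl⟩
      · simp at hw
      simp only [List.zipWith_cons_cons, List.map_cons, List.mem_cons, forall_eq_or_imp] at hwU ⊢
      exact congrArg₂ _ (nu_mul_of_isUnit hwU.1 x) (ih.2 ⟨w, by simpa using hw, hwU.2, rfl⟩)

end ZMod

open ZMod

namespace List

lemma exists_sum_map_pow_eq {R : Type*} [CommSemiring R] (a : R) {m : ℕ} {V : List ℕ}
    (hV : ∀ x ∈ V, m ≤ x) : ∃ t : R, (V.map (a ^ ·)).sum = a ^ m * (V.count m + a * t) := by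
  induction V with
  | nil => exact ⟨0, by simp⟩
  | cons x V ih =>
    obtain ⟨t, ht⟩ := ih fun y hy => hV y (mem_cons_of_mem x hy)
    rcases (hV x mem_cons_self).eq_or_lt with rfl | hlt
    · exact ⟨t, by rw [map_cons, sum_cons, ht, count_cons_self]; push_cast; ring⟩
    · refine ⟨t + a ^ (x - m - 1), ?_⟩
      have hx : a ^ x = a ^ m * (a * a ^ (x - m - 1)) := by
        rw [← pow_succ', ← pow_add]; congr 1; omega
      rw [map_cons, sum_cons, ht, hx, count_cons_of_ne hlt.ne']
      ring

variable {V : List ℕ}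

lemma exists_minimal_of_mem {x : ℕ} (hx : x ∈ V) : ∃ v ∈ V, v ≤ x ∧ ∀ y ∈ V, v ≤ y := by
  obtain ⟨v, hv⟩ := Option.isSome_iff_exists.1 (isSome_min?_of_mem hx)
  obtain ⟨hvV, hmin⟩ := min?_eq_some_iff.1 hv
  exact ⟨v, hvV, hmin x hx, hmin⟩

lemma countP_lt_succ (V : List ℕ) (v : ℕ) :
    V.countP (· < v + 1) = V.countP (· < v) + V.count v := by
  induction V with
  | nil => rfl
  | cons x V ih =>
    simp only [countP_cons, count_cons, ih, decide_eq_true_eq, beq_iff_eq]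
    split_ifs <;> omega

lemma countP_lt_eq_sum_count (V : List ℕ) (v : ℕ) :
    V.countP (· < v) = ∑ w ∈ Finset.range v, V.count w := by
  induction v with
  | zero => simp
  | succ v ih => rw [countP_lt_succ, ih, Finset.sum_range_succ]

lemma length_eq_countP_lt_add_count_add_countP_gt (V : List ℕ) (v : ℕ) :
    V.length = V.countP (· < v) + V.count v + V.countP (v < ·) := by
  induction V with
  | nil => rfl
  | cons x V ih =>
    simp only [length_cons, countP_cons, count_cons, decide_eq_true_eq, beq_iff_eq]
    split_ifs <;> omega

lemma countP_lt_le_of_count_le_one {v : ℕ} (h : ∀ w < v, V.count w ≤ 1) :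
    V.countP (· < v) ≤ v := by
  rw [countP_lt_eq_sum_count]
  calc _ ≤ ∑ _w ∈ Finset.range v, 1 :=
        Finset.sum_le_sum fun w hw => h w (Finset.mem_range.1 hw)
    _ = v := by simp

lemma countP_lt_eq_of_count_eq_one {v : ℕ} (h : ∀ w < v, V.count w = 1) :
    V.countP (· < v) = v := by
  rw [countP_lt_eq_sum_count, Finset.sum_congr rfl fun w hw => h w (Finset.mem_range.1 hw)]
  simp

lemma count_eq_one_of_countP_lt_eq {v : ℕ} (h : ∀ w < v, V.count w ≤ 1)
    (heq : V.countP (· < v) = v) : ∀ w < v, V.count w = 1 := by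
  by_contra! hne
  obtain ⟨w, hw, hw1⟩ := hne
  have : V.countP (· < v) < v := by
    rw [countP_lt_eq_sum_count]
    calc _ < ∑ _w ∈ Finset.range v, 1 :=
          Finset.sum_lt_sum (fun w hw => h w (Finset.mem_range.1 hw))
            ⟨w, Finset.mem_range.2 hw, by have := h w hw; omega⟩
      _ = v := by simp
  omega

lemma replicate_append_take_filter_subperm {e v : ℕ} (k : ℕ) (he : e ≤ V.count v) :
    replicate e v ++ (V.filter (v < ·)).take k <+~ V := by
  rw [subperm_iff_count]
  intro x
  have hle := ((take_sublist k (V.filter (v < ·))).trans filter_sublist).count_le x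
  rw [count_append, count_replicate]
  by_cases hx : x = v
  · subst hx
    have hv : x ∉ (V.filter (x < ·)).take k := fun h => by
      simpa using (mem_filter.1 (mem_of_mem_take h)).2
    rw [count_eq_zero.2 hv]
    simpa using he
  · simpa [Ne.symm hx] using hle

end List

def IsZeroSumProfile (r : ℕ) (V : List ℕ) : Prop :=
  ∀ v < r, (∀ x ∈ V, v ≤ x) → Even (V.count v)

def HasZeroSumSubprofile (r n : ℕ) (V : List ℕ) : Prop :=
  ∃ W, W <+~ V ∧ W.length = n ∧ IsZeroSumProfile r W

section Profiles

variable {r n : ℕ} {V : List ℕ}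

lemma IsZeroSumProfile.perm {W : List ℕ} (h : V ~ W) (hV : IsZeroSumProfile r V) :
    IsZeroSumProfile r W :=
  fun v hv hmin => h.count_eq v ▸ hV v hv fun x hx => hmin x (h.mem_iff.1 hx)

lemma hasZeroSumSubprofile_congr {V' : List ℕ} (h : V ~ V') :
    HasZeroSumSubprofile r n V ↔ HasZeroSumSubprofile r n V' :=
  ⟨fun ⟨W, hW, hl, hp⟩ => ⟨W, hW.trans h.subperm, hl, hp⟩,
    fun ⟨W, hW, hl, hp⟩ => ⟨W, hW.trans h.symm.subperm, hl, hp⟩⟩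

lemma isZeroSumProfile_replicate (k : ℕ) : IsZeroSumProfile r (List.replicate k r) :=
  fun v hv _ => by simp [List.count_replicate, hv.ne']

lemma isZeroSumProfile_replicate_append {e v : ℕ} {X : List ℕ} (he : Even e) (he0 : e ≠ 0)
    (hX : ∀ x ∈ X, v < x) : IsZeroSumProfile r (List.replicate e v ++ X) := by
  intro u _ hmin
  have huv : u ≤ v := hmin v (List.mem_append_left _ (List.mem_replicate.2 ⟨he0, rfl⟩))
  rw [List.count_append, List.count_eq_zero.2 fun hu => (hX u hu).not_ge huv, add_zero,
    List.count_replicate]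
  rcases huv.eq_or_lt with rfl | hlt
  · simpa using he
  · simp [hlt.ne']

lemma hasZeroSumSubprofile_of_le_count (h : n ≤ V.count r) : HasZeroSumSubprofile r n V :=
  ⟨List.replicate n r, (List.replicate_sublist_iff.2 h).subperm, List.length_replicate,
    isZeroSumProfile_replicate n⟩

lemma hasZeroSumSubprofile_of_even_part {v : ℕ} (hn : Even n) (hn0 : n ≠ 0)
    (hc : 2 ≤ V.count v) (h : n ≤ 2 * (V.count v / 2) + V.countP (v < ·)) :
    HasZeroSumSubprofile r n V := by
  set e := min (2 * (V.count v / 2)) n with he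
  refine ⟨_, replicate_append_take_filter_subperm (n - e) (e := e) (v := v) (by omega), ?_,
    isZeroSumProfile_replicate_append ?_ (by omega) fun x hx => ?_⟩
  · simp only [List.length_append, List.length_replicate, List.length_take,
      ← List.countP_eq_length_filter]
    omega
  · rcases min_choice (2 * (V.count v / 2)) n with h' | h' <;> rw [he, h']
    exacts [even_two_mul _, hn]
  · simpa using (List.mem_filter.1 (List.mem_of_mem_take hx)).2

lemma count_le_one_of_not_hasZeroSumSubprofile (hn : Even n) (hn0 : n ≠ 0)
    (h : ¬ HasZeroSumSubprofile r n V) : ∀ v, v + n < V.length → V.count v ≤ 1 := by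
  intro v
  induction v using Nat.strong_induction_on with
  | _ v ih =>
    intro hlen
    by_contra! hc
    have hbelow := countP_lt_le_of_count_le_one fun w hw => ih w hw (by omega)
    have hsplit := length_eq_countP_lt_add_count_add_countP_gt V v
    exact h (hasZeroSumSubprofile_of_even_part hn hn0 hc (by omega))

lemma hasZeroSumSubprofile_of_length (hn : Even n) (hn0 : n ≠ 0) (hV : ∀ x ∈ V, x ≤ r)
    (hlen : V.length = n + r) : HasZeroSumSubprofile r n V := by
  by_contra h
  have hbelow := countP_lt_le_of_count_le_one (v := r) fun w hw =>
    count_le_one_of_not_hasZeroSumSubprofile hn hn0 h w (by omega)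
  have htop : V.count r < n := lt_of_not_ge fun h' => h (hasZeroSumSubprofile_of_le_count h')
  have habove : V.countP (r < ·) = 0 := List.countP_eq_zero.2 fun x hx => by simpa using hV x hx
  have hsplit := length_eq_countP_lt_add_count_add_countP_gt V r
  omega

lemma counts_of_not_hasZeroSumSubprofile {m : ℕ} (hn : Even n) (hn0 : n ≠ 0)
    (hV : ∀ x ∈ V, x ≤ m + 1) (hlen : V.length = n + m)
    (h : ¬ HasZeroSumSubprofile (m + 1) n V) : (∀ v < m, V.count v = 1) ∧ Odd (V.count m) := by
  have hle : ∀ v < m, V.count v ≤ 1 := fun v hv =>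
    count_le_one_of_not_hasZeroSumSubprofile hn hn0 h v (by omega)
  have hbelow := countP_lt_le_of_count_le_one hle
  have htop : V.count (m + 1) < n :=
    lt_of_not_ge fun h' => h (hasZeroSumSubprofile_of_le_count h')
  have habove : V.countP (m < ·) = V.count (m + 1) := by
    rw [List.count_eq_countP]
    refine List.countP_congr fun x hx => ?_
    have := hV x hx
    simp only [decide_eq_true_eq, beq_iff_eq]
    omega
  have hsplit := length_eq_countP_lt_add_count_add_countP_gt V m
  have hpair : V.count m + V.count (m + 1) = n ∧ Odd (V.count m) := by
    rcases lt_or_ge (V.count m) 2 with hc | hc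
    · exact ⟨by omega, Nat.odd_iff.2 (by omega)⟩
    · have := lt_of_not_ge fun h' => h (hasZeroSumSubprofile_of_even_part hn hn0 hc h')
      exact ⟨by omega, Nat.odd_iff.2 (by omega)⟩
  exact ⟨count_eq_one_of_countP_lt_eq hle (by omega), hpair.2⟩

lemma not_hasZeroSumSubprofile_of_counts {m : ℕ} (hm : m < r) (hlen : V.length = n + m)
    (hone : ∀ v < m, V.count v = 1) (hodd : Odd (V.count m)) :
    ¬ HasZeroSumSubprofile r n V := by
  rintro ⟨W, hWV, hWlen, hW⟩
  have hWm : ∀ x ∈ W, m ≤ x := by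
    by_contra! hex
    obtain ⟨x, hxW, hxm⟩ := hex
    obtain ⟨v, hvW, hvx, hmin⟩ := exists_minimal_of_mem hxW
    have h1 := (hWV.count_le v).trans (hone v (by omega)).le
    have h2 := List.count_pos_iff.2 hvW
    exact Nat.not_even_one (by simpa [show W.count v = 1 by omega] using hW v (by omega) hmin)
  obtain ⟨k, hk⟩ := hW m hm hWm
  obtain ⟨j, hj⟩ := hodd
  have hbelowW : W.countP (· < m) = 0 :=
    List.countP_eq_zero.2 fun x hx => by simpa using hWm x hx
  have := hWV.count_le m
  have := hWV.countP_le (m < ·)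
  have := length_eq_countP_lt_add_count_add_countP_gt W m
  have := length_eq_countP_lt_add_count_add_countP_gt V m
  have := countP_lt_eq_of_count_eq_one hone
  omega

end Profiles

section ZeroSums

variable {r : ℕ}

lemma exists_map_nu_perm_sum_eq_zero {V : List ℕ} (hVr : ∀ x ∈ V, x ≤ r)
    (hV : IsZeroSumProfile r V) : ∃ Y : List (ZMod (2 ^ r)), Y.map (nu r) ~ V ∧ Y.sum = 0 := by
  by_cases htop : ∀ x ∈ V, x = r
  · refine ⟨V.map (2 ^ ·), .of_eq (map_nu_map_two_pow hVr), List.sum_eq_zero fun y hy => ?_⟩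
    obtain ⟨x, hx, rfl⟩ := List.mem_map.1 hy
    rw [htop x hx, two_pow_eq_zero]
  push Not at htop
  obtain ⟨x, hx, hxr⟩ := htop
  obtain ⟨m, hmV, hmx, hmin⟩ := exists_minimal_of_mem hx
  have hmr : m < r := hmx.trans_lt ((hVr x hx).lt_of_ne hxr)
  obtain ⟨k, hk⟩ : Odd ((V.erase m).count m) := by
    rw [List.count_erase_self]
    exact Nat.Even.sub_odd (List.count_pos_iff.2 hmV) (hV m hmr hmin) odd_one
  obtain ⟨t, ht⟩ := exists_sum_map_pow_eq (2 : ZMod (2 ^ r))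
    fun x hx => hmin x (List.mem_of_mem_erase hx)
  -- The other terms sum to `2 ^ m * (1 + 2 * (k + t))`, with `1 + 2 * (k + t)` a unit.
  refine ⟨(-(1 + 2 * (k + t)) * 2 ^ m) :: (V.erase m).map (2 ^ ·), ?_, ?_⟩
  · rw [List.map_cons, nu_mul_of_isUnit (isUnit_one_add_two_mul _).neg, nu_two_pow hmr.le,
      map_nu_map_two_pow fun x hx => hVr x (List.mem_of_mem_erase hx)]
    exact (List.perm_cons_erase hmV).symm
  · rw [List.sum_cons, ht, hk]
    push_cast
    ring

lemma isWZSum_iff (hr : r ≠ 0) {T : List (ZMod (2 ^ r))} :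
    IsWZSum (U (2 ^ r)) T ↔ IsZeroSumProfile r (T.map (nu r)) := by
  constructor
  · rintro ⟨w, hw, hwU, hsum⟩ v hv hmin
    rw [← (map_nu_eq_map_nu_iff hr).2 ⟨w, hw, hwU, rfl⟩] at hmin ⊢
    exact even_count_nu_of_sum_eq_zero hv (fun y hy => hmin _ (List.mem_map_of_mem hy)) hsum
  · intro h
    obtain ⟨Y, hYT, hY⟩ := exists_map_nu_perm_sum_eq_zero (by simp [nu_le]) h
    obtain ⟨Y', hY'T, hY'Y⟩ :=
      (congrFun₂ (List.eq_map_comp_perm (nu r)) (T.map (nu r)) Y).mpr hYT.symm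
    obtain ⟨w, hw, hwU, rfl⟩ := (map_nu_eq_map_nu_iff hr).1 hY'T.symm
    exact ⟨w, hw, hwU, hY'Y.sum_eq.trans hY⟩

lemma hasWZSS_iff (hr : r ≠ 0) {S : List (ZMod (2 ^ r))} {t : ℕ} :
    HasWZSS (U (2 ^ r)) S t ↔ 0 < t ∧ HasZeroSumSubprofile r t (S.map (nu r)) := by
  refine and_congr_right fun _ => ⟨?_, ?_⟩
  · rintro ⟨T, hTS, rfl, hT⟩
    exact ⟨T.map (nu r), (hTS.map _).subperm, List.length_map _, (isWZSum_iff hr).1 hT⟩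
  · rintro ⟨W, ⟨W', hW'W, hW'S⟩, rfl, hW⟩
    obtain ⟨T, hTS, rfl⟩ := List.sublist_map_iff.1 hW'S
    exact ⟨T, hTS, by simpa using hW'W.length_eq, (isWZSum_iff hr).2 (hW.perm hW'W.symm)⟩

lemma HasWZSS.mono {n : ℕ} {A : Set (ZMod n)} {S S' : List (ZMod n)} {t : ℕ} (h : S <+ S') :
    HasWZSS A S t → HasWZSS A S' t :=
  fun ⟨ht, T, hT, hl, hz⟩ => ⟨ht, T, hT.trans h, hl, hz⟩

lemma map_nu_perm_of_aEquiv (hr : r ≠ 0) {S T : List (ZMod (2 ^ r))}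
    (h : AEquiv (U (2 ^ r)) S T) : T.map (nu r) ~ S.map (nu r) := by
  obtain ⟨c, hc, w, hw, hwU, hperm⟩ := h
  have hc' : (T.map (c * ·)).map (nu r) = T.map (nu r) := by
    rw [List.map_map]
    exact List.map_congr_left fun y _ => nu_mul_of_isUnit hc y
  rw [← hc', ← (map_nu_eq_map_nu_iff hr).2 ⟨w, hw, hwU, rfl⟩]
  exact hperm.map (nu r)

lemma aEquiv_map_two_pow_nu (hr : r ≠ 0) (S : List (ZMod (2 ^ r))) :
    AEquiv (U (2 ^ r)) S (S.map fun x => 2 ^ nu r x) := by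
  obtain ⟨w, hw, hwU, hzip⟩ := (map_nu_eq_map_nu_iff hr).1 (map_nu_map_two_pow_nu S)
  exact ⟨1, isUnit_one, w, hw, hwU, by simp [hzip, Function.comp_def]⟩

end ZeroSums

section GaoConstant

variable {r : ℕ}

lemma eq_two_pow_nu_iff {x : ZMod (2 ^ r)} :
    x = 2 ^ nu r x ↔ x = 0 ∨ ∃ i ≤ r - 1, x = 2 ^ i := by
  constructor
  · intro hx
    by_cases h0 : x = 0
    · exact Or.inl h0
    · exact Or.inr ⟨nu r x, by have := nu_lt_of_ne_zero h0; omega, hx⟩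
  · rintro (rfl | ⟨i, hi, rfl⟩)
    · rw [nu_zero, two_pow_eq_zero]
    · rw [nu_two_pow (by omega)]

lemma count_two_pow_eq_count_map_nu {T : List (ZMod (2 ^ r))} (hT : ∀ x ∈ T, x = 2 ^ nu r x)
    {v : ℕ} (hv : v ≤ r) : T.count (2 ^ v) = (T.map (nu r)).count v := by
  rw [List.count_eq_countP, List.count_eq_countP, List.countP_map]
  refine List.countP_congr fun x hx => ?_
  simp only [Function.comp_apply, beq_iff_eq]
  exact ⟨fun h => h ▸ nu_two_pow hv, fun h => (hT x hx).trans (h ▸ rfl)⟩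

lemma exists_length_not_hasWZSS (hr : r ≠ 0) : ∃ S : List (ZMod (2 ^ r)),
    S.length = 2 ^ r + r - 1 ∧ ¬ HasWZSS (U (2 ^ r)) S (2 ^ r) := by
  obtain ⟨m, rfl⟩ := Nat.exists_eq_add_one_of_ne_zero hr
  set V := List.range (m + 1) ++ List.replicate (2 ^ (m + 1) - 1) (m + 1)
  have hV : ∀ x ∈ V, x ≤ m + 1 := by
    simp only [V, List.mem_append, List.mem_range, List.mem_replicate]
    omega
  have hlen : V.length = 2 ^ (m + 1) + m := by
    simp only [V, List.length_append, List.length_range, List.length_replicate]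
    have : 0 < 2 ^ (m + 1) := by positivity
    omega
  refine ⟨V.map (2 ^ ·), by rw [List.length_map, hlen]; omega, fun h => ?_⟩
  rw [hasWZSS_iff hr, map_nu_map_two_pow hV] at h
  refine not_hasZeroSumSubprofile_of_counts (lt_add_one m) hlen (fun v hv => ?_) ?_ h.2
  · simp only [V, List.count_append, List.count_replicate, List.count_range, beq_iff_eq]
    split_ifs <;> omega
  · simp [V, List.count_replicate]

lemma gaoC_two_pow (hr : r ≠ 0) : GaoC (2 ^ r) (U (2 ^ r)) = 2 ^ r + r := by
  have hpos : 0 < 2 ^ r := by positivity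
  rw [GaoC]
  set s :=
    {k | 0 < k ∧ ∀ S : List (ZMod (2 ^ r)), S.length = k → HasWZSS (U (2 ^ r)) S (2 ^ r)}
  have hupward : ∀ k₁ k₂, k₁ ≤ k₂ → k₁ ∈ s → k₂ ∈ s := fun k₁ k₂ hk ⟨hk₁, h⟩ =>
    ⟨by omega, fun S hS => (h (S.take k₁) (by simp [hS, hk])).mono (List.take_sublist _ _)⟩
  obtain ⟨S₀, hS₀, hno⟩ := exists_length_not_hasWZSS hr
  rw [show 2 ^ r + r = 2 ^ r + r - 1 + 1 by omega, Nat.sInf_upward_closed_eq_succ_iff hupward]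
  refine ⟨⟨by omega, fun S hS => (hasWZSS_iff hr).2 ⟨by positivity,
    hasZeroSumSubprofile_of_length (Nat.even_pow.2 ⟨even_two, hr⟩) (by positivity)
      (by simp [nu_le]) (by rw [List.length_map, hS]; omega)⟩⟩, fun ⟨_, h⟩ => hno (h S₀ hS₀)⟩

lemma isGaoExtremal_iff_counts (m : ℕ) (S : List (ZMod (2 ^ (m + 1)))) :
    IsGaoExtremal (2 ^ (m + 1)) (U (2 ^ (m + 1))) S ↔ S.length = 2 ^ (m + 1) + m ∧
      (∀ v < m, (S.map (nu (m + 1))).count v = 1) ∧ Odd ((S.map (nu (m + 1))).count m) := by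
  have hm : m + 1 ≠ 0 := m.add_one_ne_zero
  have hn : Even (2 ^ (m + 1)) := Nat.even_pow.2 ⟨even_two, hm⟩
  have hn0 : 2 ^ (m + 1) ≠ 0 := by positivity
  rw [IsGaoExtremal, gaoC_two_pow hm, hasWZSS_iff hm, ← add_assoc, Nat.add_sub_cancel]
  refine and_congr_right fun hlen => ⟨fun hno => ?_, fun ⟨hone, hodd⟩ ⟨_, h⟩ => ?_⟩
  · exact counts_of_not_hasZeroSumSubprofile hn hn0 (by simp [nu_le]) (by simpa using hlen)
      fun h => hno ⟨Nat.pos_of_ne_zero hn0, h⟩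
  · exact not_hasZeroSumSubprofile_of_counts (lt_add_one m) (by simpa using hlen) hone hodd h

end GaoConstant

/-- For `n = 2 ^ r`, `r ≥ 2`: a sequence in `ZMod n` is a `U(n)`-extremal sequence for the
Gao constant iff it is `U(n)`-equivalent to a sequence `T` of length `n + r - 1` in which
`2 ^ i` occurs exactly once for each `0 ≤ i ≤ r - 2`, `2 ^ (r - 1)` occurs an odd number
of times, and all remaining terms are zero. -/
theorem gao_extremal_iff_two_pow (r : ℕ) (hr : 2 ≤ r) (S : List (ZMod (2 ^ r))) :
    IsGaoExtremal (2 ^ r) (U (2 ^ r)) S ↔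
      ∃ T : List (ZMod (2 ^ r)),
        AEquiv (U (2 ^ r)) S T ∧
        T.length = 2 ^ r + r - 1 ∧
        (∀ i ≤ r - 2, T.count ((2 : ZMod (2 ^ r)) ^ i) = 1) ∧
        Odd (T.count ((2 : ZMod (2 ^ r)) ^ (r - 1))) ∧
        (∀ x ∈ T, x = 0 ∨ ∃ i ≤ r - 1, x = (2 : ZMod (2 ^ r)) ^ i) := by
  obtain ⟨m, rfl⟩ := Nat.exists_eq_add_one_of_ne_zero (by omega : r ≠ 0)
  simp only [isGaoExtremal_iff_counts, ← add_assoc, Nat.add_sub_cancel]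
  constructor
  · rintro ⟨hlen, hone, hodd⟩
    set T := S.map fun x => (2 : ZMod (2 ^ (m + 1))) ^ nu (m + 1) x
    have hT : ∀ x ∈ T, x = 2 ^ nu (m + 1) x := by
      simp [T, nu_two_pow (nu_le _)]
    have hcount : ∀ v ≤ m + 1, T.count (2 ^ v) = (S.map (nu (m + 1))).count v := by
      intro v hv
      rw [count_two_pow_eq_count_map_nu hT hv, map_nu_map_two_pow_nu]
    refine ⟨T, aEquiv_map_two_pow_nu (Nat.add_one_ne_zero m) S, by simpa [T] using hlen,
      fun i hi => ?_, by rwa [hcount m m.le_succ], fun x hx => eq_two_pow_nu_iff.1 (hT x hx)⟩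
    rw [hcount i (by omega)]
    exact hone i (by omega)
  · rintro ⟨T, hST, hlen, hone, hodd, hmem⟩
    have hT : ∀ x ∈ T, x = 2 ^ nu (m + 1) x := fun x hx => eq_two_pow_nu_iff.2 (hmem x hx)
    have hperm := map_nu_perm_of_aEquiv (Nat.add_one_ne_zero m) hST
    refine ⟨by simpa [hlen] using hperm.length_eq.symm, fun v hv => ?_, ?_⟩
    · rw [← hperm.count_eq, ← count_two_pow_eq_count_map_nu hT (by omega)]
      exact hone v (by omega)
    · rwa [← hperm.count_eq, ← count_two_pow_eq_count_map_nu hT m.le_succ]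
end

section
/- Let n = 2^r p, where p is an odd prime and r ≥ 1. Let S be a sequence in Z_n of length at least n + 2 which has no U(n)-weighted zero-sum subsequence of length n. Then S has at most two odd terms (terms whose image under the natural map Z_n → Z_2 is 1). Moreover, if S has exactly two odd terms, then exactly one of these two odd terms is a unit of Z_n, and every other term of S is divisible by p (i.e., lies in pZ_n). -/
/-! By the Chinese remainder theorem `ℤ_n ≅ ℤ_{2^r} × ℤ_p`, a sequence is a `U(n)`-weighted
zero-sum as soon as both of its images are unit-weighted zero-sums. In `ℤ_{2^r}`, where the units
are the odd residues, this holds when the number of odd terms is even and positive: one odd term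
is weighted so as to cancel the (odd, hence unit) sum of all the others. In `ℤ_p` it holds unless
exactly one term is nonzero, because `2 ≠ 0` leaves room to make the sum of all terms but one
nonzero. Sorting the terms of `S` by parity and by divisibility by `p`, it remains to count when
`n` terms with these two properties can be chosen. -/

open Finset

theorem ZMod.chineseRemainder_apply {m n : ℕ} (h : m.Coprime n) (z : ZMod (m * n)) :
    chineseRemainder h z =
      (castHom (dvd_mul_right m n) (ZMod m) z, castHom (dvd_mul_left n m) (ZMod n) z) :=
  Prod.ext
    (RingHom.ext_iff.1 (Subsingleton.elim ((RingHom.fst _ _).comp (chineseRemainder h).toRingHom)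
      _) z)
    (RingHom.ext_iff.1 (Subsingleton.elim ((RingHom.snd _ _).comp (chineseRemainder h).toRingHom)
      _) z)

theorem ZMod.isUnit_iff_of_coprime {m n : ℕ} (h : m.Coprime n) (z : ZMod (m * n)) :
    IsUnit z ↔ IsUnit (castHom (dvd_mul_right m n) (ZMod m) z) ∧
      IsUnit (castHom (dvd_mul_left n m) (ZMod n) z) := by
  rw [← MulEquiv.isUnit_map (chineseRemainder h).toMulEquiv, Prod.isUnit_iff]
  simp [chineseRemainder_apply]

theorem ZMod.isUnit_prime_pow_iff {q d : ℕ} (hq : q.Prime) (hd : d ≠ 0) (y : ZMod (q ^ d)) :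
    IsUnit y ↔ castHom (dvd_pow_self q hd) (ZMod q) y ≠ 0 := by
  have : NeZero (q ^ d) := ⟨pow_ne_zero d hq.ne_zero⟩
  rw [← natCast_zmod_val y, isUnit_natCast_iff_not_dvd_pow hq (Nat.pos_of_ne_zero hd),
    map_natCast, Ne, natCast_eq_zero_iff]

theorem ZMod.isUnit_two_pow_iff {r : ℕ} (hr : r ≠ 0) (y : ZMod (2 ^ r)) :
    IsUnit y ↔ castHom (dvd_pow_self 2 hr) (ZMod 2) y = 1 := by
  rw [isUnit_prime_pow_iff Nat.prime_two hr]
  generalize castHom (dvd_pow_self 2 hr) (ZMod 2) y = z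
  revert z
  decide

theorem ZMod.isUnit_castHom_two_pow_iff {r : ℕ} (hr : r ≠ 0) (m : ℕ) (y : ZMod (2 ^ r * m)) :
    IsUnit (castHom (dvd_mul_right (2 ^ r) m) (ZMod (2 ^ r)) y) ↔
      castHom (dvd_mul_of_dvd_left (dvd_pow_self 2 hr) m) (ZMod 2) y = 1 := by
  rw [isUnit_two_pow_iff hr, ← RingHom.comp_apply, castHom_comp]

theorem ZMod.isUnit_two_pow_mul_prime_iff {r p : ℕ} (hr : r ≠ 0) (hp : p.Prime) (hp2 : p ≠ 2)
    (y : ZMod (2 ^ r * p)) :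
    IsUnit y ↔ castHom (dvd_mul_of_dvd_left (dvd_pow_self 2 hr) p) (ZMod 2) y = 1 ∧
      castHom (dvd_mul_left p (2 ^ r)) (ZMod p) y ≠ 0 := by
  have : Fact p.Prime := ⟨hp⟩
  rw [isUnit_iff_of_coprime ((Nat.coprime_two_left.2 (hp.odd_of_ne_two hp2)).pow_left r),
    isUnit_castHom_two_pow_iff hr, isUnit_iff_ne_zero]

section UnitWeightedZeroSum

variable {ι R : Type*} [CommRing R] {I : Finset ι}

/-- Index-set form of `IsWZSum (U n)`, over any commutative ring. -/
def IsUnitWZSum (I : Finset ι) (x : ι → R) : Prop :=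
  ∃ u : ι → R, (∀ k, IsUnit (u k)) ∧ ∑ k ∈ I, u k * x k = 0

theorem isUnitWZSum_of_coprime {m n : ℕ} (h : m.Coprime n) {x : ι → ZMod (m * n)}
    (hm : IsUnitWZSum I (ZMod.castHom (dvd_mul_right m n) (ZMod m) ∘ x))
    (hn : IsUnitWZSum I (ZMod.castHom (dvd_mul_left n m) (ZMod n) ∘ x)) :
    IsUnitWZSum I x := by
  obtain ⟨u, hu, hu0⟩ := hm
  obtain ⟨v, hv, hv0⟩ := hn
  set e := ZMod.chineseRemainder h
  refine ⟨fun k => e.symm (u k, v k), fun k => (Prod.isUnit_iff.2 ⟨hu k, hv k⟩).map e.symm,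
    e.injective ?_⟩
  simp only [map_sum, map_mul, RingEquiv.apply_symm_apply, e, ZMod.chineseRemainder_apply,
    map_zero]
  ext
  · simpa [Prod.fst_sum] using hu0
  · simpa [Prod.snd_sum] using hv0

variable [DecidableEq ι]

theorem isUnitWZSum_of_isUnit_sum_erase {x : ι → R} {i : ι} (hi : i ∈ I) (hxi : IsUnit (x i))
    {v : ι → R} (hv : ∀ k, IsUnit (v k)) (hs : IsUnit (∑ k ∈ I.erase i, v k * x k)) :
    IsUnitWZSum I x := by
  set s := ∑ k ∈ I.erase i, v k * x k
  refine ⟨Function.update v i (-s * ↑hxi.unit⁻¹), fun k => ?_, ?_⟩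
  · rcases eq_or_ne k i with rfl | hk
    · simpa using hs.neg.mul hxi.unit⁻¹.isUnit
    · simpa [hk] using hv k
  · rw [← add_sum_erase I _ hi,
      sum_congr rfl fun k hk => by rw [Function.update_of_ne (ne_of_mem_erase hk)],
      Function.update_self, mul_assoc, IsUnit.val_inv_mul, mul_one, neg_add_cancel]

theorem isUnitWZSum_two_pow {r : ℕ} (hr : r ≠ 0) (x : ι → ZMod (2 ^ r))
    (heven : Even #{k ∈ I | IsUnit (x k)}) (hpos : #{k ∈ I | IsUnit (x k)} ≠ 0) :
    IsUnitWZSum I x := by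
  have hparity (y : ZMod (2 ^ r)) :
      ZMod.castHom (dvd_pow_self 2 hr) (ZMod 2) y = if IsUnit y then 1 else 0 := by
    have key : ∀ z : ZMod 2, z = if z = 1 then 1 else 0 := by decide
    simpa only [← ZMod.isUnit_two_pow_iff hr] using key (ZMod.castHom _ (ZMod 2) y)
  obtain ⟨i, hi⟩ := card_ne_zero.1 hpos
  refine isUnitWZSum_of_isUnit_sum_erase (mem_filter.1 hi).1 (mem_filter.1 hi).2 (v := 1)
    (fun _ => isUnit_one) ?_
  rw [ZMod.isUnit_two_pow_iff hr, map_sum]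
  simp only [Pi.one_apply, one_mul, hparity]
  rw [sum_boole, filter_erase, card_erase_of_mem hi, ZMod.natCast_eq_one_iff_odd]
  exact Nat.Even.sub_odd (Nat.one_le_iff_ne_zero.2 hpos) heven odd_one

theorem isUnitWZSum_of_card_ne_one {F : Type*} [Field F] [DecidableEq F] (h2 : (2 : F) ≠ 0)
    (x : ι → F) (h : #{k ∈ I | x k ≠ 0} ≠ 1) : IsUnitWZSum I x := by
  rcases Nat.lt_or_gt_of_ne h with h0 | h1
  · refine ⟨1, fun _ => isUnit_one, sum_eq_zero fun k hk => ?_⟩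
    have : x k = 0 := by
      by_contra hk'
      have : 0 < #{k ∈ I | x k ≠ 0} := card_pos.2 ⟨k, mem_filter.2 ⟨hk, hk'⟩⟩
      omega
    simp [this]
  obtain ⟨i, hi, j, hj, hij⟩ := one_lt_card.1 h1
  rw [mem_filter] at hi hj
  by_cases hs : ∑ k ∈ I.erase i, x k = 0
  · -- doubling the weight of `x j` turns the sum of the terms other than `x i` into `x j`
    refine isUnitWZSum_of_isUnit_sum_erase hi.1 (isUnit_iff_ne_zero.2 hi.2)
      (v := fun k => if k = j then 2 else 1)
      (fun k => by split_ifs; exacts [h2.isUnit, isUnit_one]) ?_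
    have hj' : j ∈ I.erase i := mem_erase.2 ⟨hij.symm, hj.1⟩
    have hsplit := add_sum_erase (I.erase i) x hj'
    rw [← add_sum_erase _ _ hj', if_pos rfl,
      sum_congr rfl fun k hk => by rw [if_neg (ne_of_mem_erase hk), one_mul],
      show 2 * x j + ∑ k ∈ (I.erase i).erase j, x k = x j by linear_combination hsplit.trans hs]
    exact isUnit_iff_ne_zero.2 hj.2
  · exact isUnitWZSum_of_isUnit_sum_erase hi.1 (isUnit_iff_ne_zero.2 hi.2) (v := 1)
      (fun _ => isUnit_one) (by simpa using hs)

theorem isUnitWZSum_two_pow_mul_prime {r p : ℕ} (hr : r ≠ 0) (hp : p.Prime) (hp2 : p ≠ 2)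
    (x : ι → ZMod (2 ^ r * p))
    (heven : Even
      #{k ∈ I | ZMod.castHom (dvd_mul_of_dvd_left (dvd_pow_self 2 hr) p) (ZMod 2) (x k) = 1})
    (hpos : #{k ∈ I | ZMod.castHom (dvd_mul_of_dvd_left (dvd_pow_self 2 hr) p) (ZMod 2) (x k) = 1}
      ≠ 0)
    (hne : #{k ∈ I | ZMod.castHom (dvd_mul_left p (2 ^ r)) (ZMod p) (x k) ≠ 0} ≠ 1) :
    IsUnitWZSum I x := by
  have : Fact p.Prime := ⟨hp⟩
  simp only [← ZMod.isUnit_castHom_two_pow_iff hr p] at heven hpos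
  exact isUnitWZSum_of_coprime ((Nat.coprime_two_left.2 (hp.odd_of_ne_two hp2)).pow_left r)
    (isUnitWZSum_two_pow hr _ heven hpos)
    (isUnitWZSum_of_card_ne_one (Ring.two_ne_zero (by rwa [ZMod.ringChar_zmod_n])) _ hne)

end UnitWeightedZeroSum

theorem exists_zeroSum_counts {α β γ δ N : ℕ} (hN : 4 ≤ N) (hNe : Even N)
    (hL : N + 2 ≤ α + β + γ + δ) (h : 3 ≤ α + β ∨ α + β = 2 ∧ ¬(α = 1 ∧ α + γ = 1)) :
    ∃ a b c d, a ≤ α ∧ b ≤ β ∧ c ≤ γ ∧ d ≤ δ ∧ a + b + c + d = N ∧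
      Even (a + b) ∧ a + b ≠ 0 ∧ a + c ≠ 1 := by
  simp only [Nat.even_iff] at hNe ⊢
  -- Take `o` as large as possible for `a + b`, and then `a, c` both as large or both as small as
  -- possible; if both choices make `a + c = 1`, the same works with `o - 2`.
  obtain ⟨o, ho2, hoα, hoN, ho, hoγ, hmax⟩ : ∃ o, o % 2 = 0 ∧ o ≤ α + β ∧ o ≤ N ∧ 2 ≤ o ∧
      N ≤ o + γ + δ ∧ (α + β < o + 2 ∨ N < o + 2) :=
    ⟨min (α + β) N - min (α + β) N % 2, by omega⟩
  by_cases h₁ : min α o + min γ (N - o) = 1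
  · by_cases h₂ : o - β + (N - o - δ) = 1
    · by_cases h₃ : min α (o - 2) + min γ (N - (o - 2)) = 1
      · exact ⟨o - 2 - β, min β (o - 2), N - (o - 2) - δ, min δ (N - (o - 2)), by omega⟩
      · exact ⟨min α (o - 2), o - 2 - min α (o - 2), min γ (N - (o - 2)),
          N - (o - 2) - min γ (N - (o - 2)), by omega⟩
    · exact ⟨o - β, min β o, N - o - δ, min δ (N - o), by omega⟩
  · exact ⟨min α o, o - min α o, min γ (N - o), N - o - min γ (N - o), by omega⟩

namespace Finset

variable {ι : Type*} {s : Finset ι}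

theorem card_filter_and_add_card_filter_and_not (P Q : ι → Prop) [DecidablePred P]
    [DecidablePred Q] : #{k ∈ s | P k ∧ Q k} + #{k ∈ s | P k ∧ ¬Q k} = #{k ∈ s | P k} := by
  rw [← filter_filter, ← filter_filter, card_filter_add_card_filter_not]

variable [DecidableEq ι]

theorem exists_subset_card_filter_eq (P : ι → Prop) [DecidablePred P] {a b : ℕ}
    (ha : a ≤ #{k ∈ s | P k}) (hb : b ≤ #{k ∈ s | ¬P k}) :
    ∃ t ⊆ s, #{k ∈ t | P k} = a ∧ #{k ∈ t | ¬P k} = b := by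
  obtain ⟨t₁, ht₁, rfl⟩ := exists_subset_card_eq ha
  obtain ⟨t₂, ht₂, rfl⟩ := exists_subset_card_eq hb
  have h₁ : ∀ k ∈ t₁, P k := fun k hk => (mem_filter.1 (ht₁ hk)).2
  have h₂ : ∀ k ∈ t₂, ¬P k := fun k hk => (mem_filter.1 (ht₂ hk)).2
  refine ⟨t₁ ∪ t₂, union_subset (ht₁.trans (filter_subset _ _)) (ht₂.trans (filter_subset _ _)),
    ?_, ?_⟩
  · rw [filter_union, filter_true_of_mem h₁, filter_false_of_mem h₂, union_empty]
  · rw [filter_union, filter_false_of_mem fun k hk => not_not.2 (h₁ k hk), filter_true_of_mem h₂,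
      empty_union]

theorem exists_subset_card_filter_and_eq (P Q : ι → Prop) [DecidablePred P]
    [DecidablePred Q] {a b c d : ℕ} (ha : a ≤ #{k ∈ s | P k ∧ Q k})
    (hb : b ≤ #{k ∈ s | P k ∧ ¬Q k}) (hc : c ≤ #{k ∈ s | ¬P k ∧ Q k})
    (hd : d ≤ #{k ∈ s | ¬P k ∧ ¬Q k}) :
    ∃ t ⊆ s, #t = a + b + c + d ∧ #{k ∈ t | P k} = a + b ∧ #{k ∈ t | Q k} = a + c := by
  rw [← filter_filter] at ha hb hc hd
  obtain ⟨t₁, ht₁, ha', hb'⟩ := exists_subset_card_filter_eq Q ha hb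
  obtain ⟨t₂, ht₂, hc', hd'⟩ := exists_subset_card_filter_eq Q hc hd
  have h₁ : ∀ k ∈ t₁, P k := fun k hk => (mem_filter.1 (ht₁ hk)).2
  have h₂ : ∀ k ∈ t₂, ¬P k := fun k hk => (mem_filter.1 (ht₂ hk)).2
  have hdisj : Disjoint t₁ t₂ := disjoint_left.2 fun k hk₁ hk₂ => h₂ k hk₂ (h₁ k hk₁)
  have hcard₁ := card_filter_add_card_filter_not (s := t₁) (Q ·)
  have hcard₂ := card_filter_add_card_filter_not (s := t₂) (Q ·)
  refine ⟨t₁ ∪ t₂, union_subset (ht₁.trans (filter_subset _ _)) (ht₂.trans (filter_subset _ _)),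
    ?_, ?_, ?_⟩
  · rw [card_union_of_disjoint hdisj]
    omega
  · rw [filter_union, filter_true_of_mem h₁, filter_false_of_mem h₂, union_empty]
    omega
  · rw [filter_union, card_union_of_disjoint (disjoint_filter_filter hdisj), ha', hc']

theorem exists_zeroSum_subset (P Q : ι → Prop) [DecidablePred P] [DecidablePred Q]
    {N : ℕ} (hN : 4 ≤ N) (hNe : Even N) (hs : N + 2 ≤ #s)
    (h : 3 ≤ #{k ∈ s | P k} ∨
      #{k ∈ s | P k} = 2 ∧ ¬(#{k ∈ s | P k ∧ Q k} = 1 ∧ #{k ∈ s | Q k} = 1)) :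
    ∃ t ⊆ s, #t = N ∧ Even #{k ∈ t | P k} ∧ #{k ∈ t | P k} ≠ 0 ∧ #{k ∈ t | Q k} ≠ 1 := by
  have hP := card_filter_and_add_card_filter_and_not (s := s) P Q
  have hnP := card_filter_and_add_card_filter_and_not (s := s) (¬P ·) Q
  have hQ := card_filter_and_add_card_filter_and_not (s := s) Q P
  simp only [and_comm (a := Q _)] at hQ
  have hall := card_filter_add_card_filter_not (s := s) (P ·)
  obtain ⟨a, b, c, d, ha, hb, hc, hd, habcd, heven, hpos, hne⟩ :=
    exists_zeroSum_counts (α := #{k ∈ s | P k ∧ Q k}) (β := #{k ∈ s | P k ∧ ¬Q k})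
      (γ := #{k ∈ s | ¬P k ∧ Q k}) (δ := #{k ∈ s | ¬P k ∧ ¬Q k}) hN hNe (by omega) (by omega)
  obtain ⟨t, hts, ht, htP, htQ⟩ := exists_subset_card_filter_and_eq P Q ha hb hc hd
  exact ⟨t, hts, ht.trans habcd, htP ▸ heven, htP ▸ hpos, htQ ▸ hne⟩

end Finset

theorem pcount_eq_card_filter {α : Type*} (P : α → Prop) [DecidablePred P] (S : List α) :
    pcount P S = #{k : Fin S.length | P (S.get k)} := by
  rw [pcount]
  conv_lhs => rw [← List.map_get_finRange S]
  rw [List.countP_map, ← List.toFinset_finRange, (List.nodup_finRange _).card_eq_countP]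
  exact List.countP_congr fun _ _ => by simp

theorem hasWZSS_of_isUnitWZSum {n : ℕ} {S : List (ZMod n)} {I : Finset (Fin S.length)}
    (hI : I.Nonempty) (h : IsUnitWZSum I S.get) : HasWZSS (U n) S #I := by
  obtain ⟨u, hu, hsum⟩ := h
  have hsub : I.sort.Sublist (List.finRange S.length) := by
    rw [← Fin.sort_univ]
    exact List.sublist_of_subperm_of_pairwise
      (List.subperm_of_subset (sort_nodup _ _) fun k _ => by simp) (pairwise_sort _ _)
      (pairwise_sort _ _)
  refine ⟨card_pos.2 hI, I.sort.map S.get, ?_, by simp, I.sort.map u, by simp,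
    by simpa [U] using fun k _ => hu k, ?_⟩
  · simpa [List.map_get_finRange] using hsub.map S.get
  · rw [List.zipWith_map, List.zipWith_self, ← hsum, sum_eq_multiset_sum, ← sort_eq I (· ≤ ·),
      Multiset.map_coe, Multiset.sum_coe]

/-- For `n = 2 ^ r * p`, `p` an odd prime, `r ≥ 1`: a sequence of length at least `n + 2`
with no `U(n)`-weighted zero-sum subsequence of length `n` has at most two odd terms;
and if it has exactly two odd terms, then exactly one of them is a unit and every other
term is divisible by `p` (i.e. exactly one term of `S` is not divisible by `p`, and it is
an odd unit). -/
theorem at_most_two_odd_terms (r p : ℕ) (hr : 1 ≤ r) (hp : p.Prime) (hpodd : p ≠ 2)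
    (S : List (ZMod (2 ^ r * p)))
    (hlen : 2 ^ r * p + 2 ≤ S.length)
    (hno : ¬ HasWZSS (U (2 ^ r * p)) S (2 ^ r * p)) :
    pcount (fun x => ZMod.castHom
        (dvd_mul_of_dvd_left (dvd_pow_self 2 (by omega)) p) (ZMod 2) x = 1) S ≤ 2 ∧
    (pcount (fun x => ZMod.castHom
        (dvd_mul_of_dvd_left (dvd_pow_self 2 (by omega)) p) (ZMod 2) x = 1) S = 2 →
      pcount (fun x => ZMod.castHom
          (dvd_mul_of_dvd_left (dvd_pow_self 2 (by omega)) p) (ZMod 2) x = 1 ∧ IsUnit x) S = 1 ∧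
      pcount (fun x => ZMod.castHom (dvd_mul_left p (2 ^ r)) (ZMod p) x ≠ 0) S = 1) := by
  classical
  have hr0 : r ≠ 0 := by omega
  have hN : 4 ≤ 2 ^ r * p := by
    have := Nat.mul_le_mul (Nat.le_self_pow hr0 2) (hp.two_le.lt_of_ne' hpodd)
    omega
  have hNe : Even (2 ^ r * p) := (Nat.even_pow.2 ⟨even_two, hr0⟩).mul_right p
  simp only [pcount_eq_card_filter, ZMod.isUnit_two_pow_mul_prime_iff hr0 hp hpodd, and_self_left]
  by_contra hcon
  obtain ⟨t, -, ht, heven, hpos, hne⟩ := exists_zeroSum_subset (s := univ)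
    (fun k => ZMod.castHom (dvd_mul_of_dvd_left (dvd_pow_self 2 hr0) p) (ZMod 2) (S.get k) = 1)
    (fun k => ZMod.castHom (dvd_mul_left p (2 ^ r)) (ZMod p) (S.get k) ≠ 0) hN hNe
    (by simpa using hlen) (by omega)
  have hzero := hasWZSS_of_isUnitWZSum (card_pos.1 (by omega))
    (isUnitWZSum_two_pow_mul_prime hr0 hp hpodd S.get heven hpos hne)
  rw [ht] at hzero
  exact hno hzero
end

section
/- Let n = 2 p_1 p_2 ⋯ p_r be squarefree, where p_1,…,p_r are distinct odd primes. For 1 ≤ i ≤ r let p̂_i = n/(2 p_i), and choose a ∈ {1, 2} so that the sequence S = (a, p̂_1, p̂_2, …, p̂_r) in Z_n has an odd number of odd terms. Then S is a U(n)-extremal sequence for the Davenport constant; in particular S has length r + 1 = D_{U(n)}(n) − 1 and has no U(n)-weighted zero-sum subsequence. -/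
/-!
Weighting by units changes neither which terms vanish modulo a prime `q ∣ n` nor, modulo `2`,
the parity of the number of odd terms. Modulo `p_i` exactly two terms of `S` survive, `a` and
`p̂_i`, so a weighted zero-sum subsequence containing one of them contains the other. Hence it
contains `a` and then all of `S`, which is impossible modulo `2` by the parity assumption.

For the upper bound `D_{U(n)}(n) ≤ Ω(n) + 1` on squarefree `n`: the supports of `Ω(n) + 1` terms,
as vectors over `ZMod 2` indexed by the primes, are linearly dependent, which gives a nonempty
subsequence with an even number of nonzero terms modulo each prime `q`. In the field `ZMod q`
such terms can be weighted by `±` their inverses to sum to zero, and the Chinese remainder theorem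
assembles the weights into units of `ZMod n`.
-/

open Finset

lemma davC_eq_length_add_one {n : ℕ} {A : Set (ZMod n)} (S : List (ZMod n))
    (hS : ¬ HasWZS A S) (hall : ∀ T : List (ZMod n), T.length = S.length + 1 → HasWZS A T) :
    DavC n A = S.length + 1 := by
  have hmem : S.length + 1 ∈ {k | 0 < k ∧ ∀ T : List (ZMod n), T.length = k → HasWZS A T} :=
    ⟨S.length.succ_pos, hall⟩
  refine le_antisymm (Nat.sInf_le hmem) (le_csInf ⟨_, hmem⟩ ?_)
  rintro k ⟨-, hk⟩
  by_contra! hlt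
  obtain ⟨T, hT, hne, hzero⟩ := hk (S.take k) (by simp; omega)
  exact hS ⟨T, hT.trans (List.take_sublist k S), hne, hzero⟩

lemma hasWZS_of_sum_eq_zero {n : ℕ} {A : Set (ZMod n)} (S : List (ZMod n))
    (I : Finset (Fin S.length)) (hI : I.Nonempty) (w : Fin S.length → ZMod n)
    (hw : ∀ i, w i ∈ A) (hsum : ∑ i ∈ I, w i * S.get i = 0) : HasWZS A S := by
  classical
  set l := (List.finRange S.length).filter (· ∈ I)
  have hl : l.toFinset = I := by ext; simp [l]
  obtain ⟨i, hi⟩ := hI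
  refine ⟨l.map S.get, ?_, List.ne_nil_of_mem (List.mem_map_of_mem (f := S.get) (a := i) ?_),
    l.map w, by simp, by simpa using fun i _ => hw i, ?_⟩
  · simpa only [List.map_get_finRange] using
      (List.filter_sublist (l := List.finRange S.length)).map S.get
  · simpa [l] using hi
  · rw [List.zipWith_map, List.zipWith_self,
      ← List.sum_toFinset _ ((List.nodup_finRange _).filter _), hl, hsum]

lemma exists_nonempty_sum_eq_zero_of_card_lt {ι κ : Type*} [Fintype ι] [Fintype κ]
    (v : κ → ι → ZMod 2) (h : Fintype.card ι < Fintype.card κ) :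
    ∃ I : Finset κ, I.Nonempty ∧ ∑ k ∈ I, v k = 0 := by
  classical
  have hdep : ¬ LinearIndependent (ZMod 2) v := fun hli => by
    have := hli.fintype_card_le_finrank
    rw [Module.finrank_fintype_fun_eq_card] at this
    omega
  obtain ⟨g, hg, k, hk⟩ := Fintype.not_linearIndependent_iff.mp hdep
  refine ⟨({k | g k ≠ 0} : Finset κ), ⟨k, by simpa using hk⟩, ?_⟩
  refine (Finset.sum_filter _ _).trans (Eq.trans (Finset.sum_congr rfl fun k _ => ?_) hg)
  rcases (by decide : ∀ c : ZMod 2, c = 0 ∨ c = 1) (g k) with hc | hc <;> simp [hc]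

lemma exists_ne_zero_sum_mul_eq_zero {F ι : Type*} [Field F] [DecidableEq F] (s : Finset ι)
    (y : ι → F) (h : Even #{i ∈ s | y i ≠ 0}) :
    ∃ w : ι → F, (∀ i, w i ≠ 0) ∧ ∑ i ∈ s, w i * y i = 0 := by
  classical
  set t := {i ∈ s | y i ≠ 0}
  obtain ⟨m, hm⟩ := h
  obtain ⟨H, hHt, hH⟩ := Finset.exists_subset_card_eq (s := t) (n := m) (by omega)
  refine ⟨fun i => if y i = 0 then 1 else if i ∈ H then (y i)⁻¹ else -(y i)⁻¹, fun i => ?_, ?_⟩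
  · dsimp only
    split_ifs <;> simp_all
  have hsdiff : #(t \ H) = m := by rw [Finset.card_sdiff_of_subset hHt]; omega
  calc ∑ i ∈ s, _ = ∑ i ∈ t, (if i ∈ H then 1 else -1 : F) := by
        rw [← Finset.sum_filter_of_ne fun i _ hi => by simpa using right_ne_zero_of_mul hi]
        refine Finset.sum_congr rfl fun i hi => ?_
        have hyi : y i ≠ 0 := (Finset.mem_filter.mp hi).2
        by_cases hiH : i ∈ H <;> simp [hyi, hiH]
    _ = 0 := by
        rw [← Finset.sum_sdiff hHt,
          Finset.sum_congr rfl fun i hi => if_neg (Finset.mem_sdiff.mp hi).2,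
          Finset.sum_congr rfl fun i hi => if_pos hi]
        simp [hsdiff, hH]

lemma hasWZS_units_of_length_eq {ι : Type*} [Fintype ι] (q : ι → ℕ) (hq : ∀ i, (q i).Prime)
    (hinj : Function.Injective q) {n : ℕ} (hn : ∏ i, q i = n) (S : List (ZMod n))
    (hS : S.length = Fintype.card ι + 1) : HasWZS (U n) S := by
  classical
  subst hn
  let φ := ZMod.prodEquivPi q fun i j hij => (Nat.coprime_primes (hq i) (hq j)).mpr (hinj.ne hij)
  obtain ⟨I, hI, hsupp⟩ := exists_nonempty_sum_eq_zero_of_card_lt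
    (fun k j => if φ (S.get k) j ≠ 0 then (1 : ZMod 2) else 0) (by simp [hS])
  have heven : ∀ j, Even #{k ∈ I | φ (S.get k) j ≠ 0} := fun j => by
    have := congrFun hsupp j
    simp only [Finset.sum_apply, Finset.sum_boole, Pi.zero_apply] at this
    exact ZMod.natCast_eq_zero_iff_even.mp this
  have hweights : ∀ j, ∃ w : Fin S.length → ZMod (q j), (∀ k, w k ≠ 0) ∧
      ∑ k ∈ I, w k * φ (S.get k) j = 0 := fun j =>
    have : Fact (q j).Prime := ⟨hq j⟩
    exists_ne_zero_sum_mul_eq_zero I _ (heven j)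
  choose w hw0 hw using hweights
  refine hasWZS_of_sum_eq_zero S I hI (fun k => φ.symm fun j => w j k) (fun k => ?_) ?_
  · have : ∀ j, Fact (q j).Prime := fun j => ⟨hq j⟩
    exact (Pi.isUnit_iff.mpr fun j => (hw0 j k).isUnit).map φ.symm
  · apply φ.injective
    ext j
    simpa only [map_sum, map_mul, RingEquiv.apply_symm_apply, Finset.sum_apply, Pi.mul_apply,
      map_zero, Pi.zero_apply] using hw j

lemma List.sum_zipWith_mul_eq_zero {R : Type*} [NonUnitalNonAssocSemiring R] :
    ∀ (w y : List R), (∀ b ∈ y, b = 0) → (List.zipWith (· * ·) w y).sum = 0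
  | [], _, _ | _ :: _, [], _ => by simp
  | u :: w, b :: y, hy => by
    simp [hy b (by simp), List.sum_zipWith_mul_eq_zero w y fun c hc => hy c (by simp [hc])]

lemma List.sum_zipWith_mul_ne_zero {R : Type*} [NonUnitalNonAssocSemiring R] [NoZeroDivisors R]
    [DecidableEq R] : ∀ (w y : List R), w.length = y.length → (∀ u ∈ w, u ≠ 0) →
      y.countP (fun b => decide (b ≠ 0)) = 1 →
      (List.zipWith (· * ·) w y).sum ≠ 0
  | [], [], _, _, hy => by simp at hy
  | [], _ :: _, h, _, _ | _ :: _, [], h, _, _ => by simp at h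
  | u :: w, b :: y, hlen, hw, hy => by
    have hu : u ≠ 0 := hw u (by simp)
    rw [List.zipWith_cons_cons, List.sum_cons]
    by_cases hb : b = 0
    · rw [hb, mul_zero, zero_add]
      exact List.sum_zipWith_mul_ne_zero w y (by simpa using hlen) (fun v hv => hw v (by simp [hv]))
        (by simpa [List.countP_cons, hb] using hy)
    · have hy0 : ∀ c ∈ y, c = 0 := by simpa [List.countP_cons, hb] using hy
      rw [List.sum_zipWith_mul_eq_zero w y hy0, add_zero]
      exact mul_ne_zero hu hb

lemma ZMod.sum_zipWith_mul_of_ne_zero :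
    ∀ (w y : List (ZMod 2)), w.length = y.length → (∀ u ∈ w, u ≠ 0) →
      (List.zipWith (· * ·) w y).sum = (y.countP (· = 1) : ZMod 2)
  | [], [], _, _ => by simp
  | [], _ :: _, h, _ | _ :: _, [], h, _ => by simp at h
  | u :: w, b :: y, hlen, hw => by
    have hu : u = 1 := (by decide : ∀ c : ZMod 2, c ≠ 0 → c = 1) u (hw u (by simp))
    rw [List.zipWith_cons_cons, List.sum_cons, List.countP_cons,
      ZMod.sum_zipWith_mul_of_ne_zero w y (by simpa using hlen) fun v hv => hw v (by simp [hv]), hu]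
    rcases (by decide : ∀ c : ZMod 2, c = 0 ∨ c = 1) b with hb | hb <;> simp [hb, add_comm]

lemma IsWZSum.exists_map {n : ℕ} {R : Type*} [Semiring R] (ψ : ZMod n →+* R) {T : List (ZMod n)}
    (hT : IsWZSum (U n) T) : ∃ w : List R, w.length = T.length ∧ (∀ u ∈ w, IsUnit u) ∧
      (List.zipWith (· * ·) w (T.map ψ)).sum = 0 := by
  obtain ⟨w, hlen, hw, hsum⟩ := hT
  refine ⟨w.map ψ, by simp [hlen], by simpa using fun u hu => (hw u hu).map ψ, ?_⟩
  simpa [map_list_sum, List.map_zipWith, List.zipWith_map] using congrArg ψ hsum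

lemma IsWZSum.pcount_ne_one {n : ℕ} {R : Type*} [Ring R] [NoZeroDivisors R] [Nontrivial R]
    (ψ : ZMod n →+* R) {T : List (ZMod n)} (hT : IsWZSum (U n) T) :
    pcount (fun x => ψ x ≠ 0) T ≠ 1 := by
  classical
  obtain ⟨w, hlen, hw, hsum⟩ := hT.exists_map ψ
  intro h1
  refine List.sum_zipWith_mul_ne_zero w _ (by simp [hlen]) (fun u hu => (hw u hu).ne_zero) ?_ hsum
  rw [List.countP_map, ← h1, pcount]
  exact List.countP_congr fun x _ => by simp

lemma IsWZSum.even_pcount {n : ℕ} (ψ : ZMod n →+* ZMod 2) {T : List (ZMod n)}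
    (hT : IsWZSum (U n) T) : Even (pcount (fun x => ψ x = 1) T) := by
  obtain ⟨w, hlen, hw, hsum⟩ := hT.exists_map ψ
  rw [ZMod.sum_zipWith_mul_of_ne_zero w _ (by simp [hlen]) fun u hu => (hw u hu).ne_zero,
    ZMod.natCast_eq_zero_iff_even, List.countP_map] at hsum
  rw [pcount]
  convert hsum using 2
  ext x
  simp

lemma two_mul_prod_div_two_mul {ι : Type*} [Fintype ι] [DecidableEq ι] (p : ι → ℕ) {i : ι}
    (hi : p i ≠ 0) : (2 * ∏ j, p j) / (2 * p i) = ∏ j ∈ univ.erase i, p j := by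
  rw [← Finset.mul_prod_erase univ p (mem_univ i), ← mul_assoc]
  exact Nat.mul_div_cancel_left _ (by positivity)

lemma prime_dvd_two_mul_prod_div_iff {ι : Type*} [Fintype ι] (p : ι → ℕ) (hp : ∀ i, (p i).Prime)
    (hinj : Function.Injective p) (k i : ι) : p k ∣ (2 * ∏ j, p j) / (2 * p i) ↔ k ≠ i := by
  classical
  rw [two_mul_prod_div_two_mul p (hp i).ne_zero, (Nat.prime_iff.mp (hp k)).dvd_finsetProd_iff]
  constructor
  · rintro ⟨j, hj, hkj⟩ rfl
    exact (Finset.mem_erase.mp hj).1 (hinj ((Nat.prime_dvd_prime_iff_eq (hp k) (hp j)).mp hkj)).symm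
  · exact fun hki => ⟨k, Finset.mem_erase.mpr ⟨hki, mem_univ k⟩, dvd_rfl⟩

lemma not_hasWZS_hat {r : ℕ} (p : Fin r → ℕ) (hp : ∀ i, (p i).Prime)
    (hinj : Function.Injective p) (a : ℕ) (ha : ∀ i, ¬ p i ∣ a)
    (hoddcount : Odd (pcount
      (fun x => ZMod.castHom (dvd_mul_right 2 (∏ i, p i)) (ZMod 2) x = 1)
      ((a : ZMod (2 * ∏ i, p i)) ::
        List.ofFn fun i => (((2 * ∏ j, p j) / (2 * p i) : ℕ) : ZMod (2 * ∏ j, p j))))) :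
    ¬ HasWZS (U (2 * ∏ i, p i))
      ((a : ZMod (2 * ∏ i, p i)) ::
        List.ofFn fun i => (((2 * ∏ j, p j) / (2 * p i) : ℕ) : ZMod (2 * ∏ j, p j))) := by
  classical
  rintro ⟨T, hsub, hne, hT⟩
  let ψ k := ZMod.castHom (dvd_mul_of_dvd_right (dvd_prod_of_mem p (mem_univ k)) 2) (ZMod (p k))
  have hcount : ∀ k (l : List (Fin r)), pcount (fun x => ψ k x ≠ 0)
      (l.map fun i => (((2 * ∏ j, p j) / (2 * p i) : ℕ) : ZMod (2 * ∏ j, p j))) = l.count k := by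
    intro k l
    rw [pcount, List.countP_map, List.count]
    refine List.countP_congr fun i _ => ?_
    simp only [Function.comp_apply, ψ, map_natCast, ne_eq, ZMod.natCast_eq_zero_iff,
      prime_dvd_two_mul_prod_div_iff p hp hinj, not_not, decide_eq_true_eq, beq_iff_eq]
    exact eq_comm
  have hsingle : ∀ k, pcount (fun x => ψ k x ≠ 0) T ≠ 1 := fun k =>
    have : Fact (p k).Prime := ⟨hp k⟩
    hT.pcount_ne_one (ψ k)
  rw [List.ofFn_eq_map] at hsub hoddcount
  rcases List.sublist_cons_iff.mp hsub with hT' | ⟨T', rfl, hT'⟩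
  · obtain ⟨l, hl, rfl⟩ := List.sublist_map_iff.mp hT'
    obtain ⟨k, hk⟩ := List.exists_mem_of_ne_nil l (by rintro rfl; exact hne rfl)
    exact hsingle k ((hcount k l).trans
      (List.count_eq_one_of_mem (hl.nodup (List.nodup_finRange r)) hk))
  · obtain ⟨l, hl, rfl⟩ := List.sublist_map_iff.mp hT'
    have hall : ∀ k, k ∈ l := fun k => by
      by_contra hk
      apply hsingle k
      have := hcount k l
      simp only [pcount] at this ⊢
      rw [List.countP_cons, this, List.count_eq_zero.mpr hk]
      simp [ψ, ZMod.natCast_eq_zero_iff, ha k]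
    obtain rfl : l = List.finRange r :=
      hl.eq_of_length_le ((List.nodup_finRange r).subperm fun k _ => hall k).length_le
    exact Nat.not_even_iff_odd.mpr hoddcount (hT.even_pcount _)

/-- Let `n = 2 * p 1 * ... * p r` be squarefree with the `p i` distinct odd primes, let
`phat i = n / (2 * p i)`, and choose `a ∈ {1, 2}` so that `S = (a, phat 1, ..., phat r)`
has an odd number of odd terms. Then `S` is a `U(n)`-extremal sequence for the Davenport
constant: it has length `D_{U(n)}(n) - 1` and no `U(n)`-weighted zero-sum subsequence. -/
theorem davenport_extremal_hat (r : ℕ) (p : Fin r → ℕ) (hp : ∀ i, (p i).Prime)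
    (hpodd : ∀ i, p i ≠ 2) (hinj : Function.Injective p)
    (a : ℕ) (ha : a = 1 ∨ a = 2)
    (hoddcount : Odd (pcount
      (fun x => ZMod.castHom (dvd_mul_right 2 (∏ i, p i)) (ZMod 2) x = 1)
      ((a : ZMod (2 * ∏ i, p i)) ::
        List.ofFn fun i => (((2 * ∏ j, p j) / (2 * p i) : ℕ) : ZMod (2 * ∏ j, p j))))) :
    ((a : ZMod (2 * ∏ i, p i)) ::
        List.ofFn fun i => (((2 * ∏ j, p j) / (2 * p i) : ℕ) : ZMod (2 * ∏ j, p j))).length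
      = DavC (2 * ∏ i, p i) (U (2 * ∏ i, p i)) - 1 ∧
    ¬ HasWZS (U (2 * ∏ i, p i))
      ((a : ZMod (2 * ∏ i, p i)) ::
        List.ofFn fun i => (((2 * ∏ j, p j) / (2 * p i) : ℕ) : ZMod (2 * ∏ j, p j))) := by
  have hpa : ∀ i, ¬ p i ∣ a := fun i hdvd => by
    rcases ha with rfl | rfl
    · exact (hp i).ne_one (Nat.dvd_one.mp hdvd)
    · exact hpodd i ((Nat.prime_dvd_prime_iff_eq (hp i) Nat.prime_two).mp hdvd)
  have hS := not_hasWZS_hat p hp hinj a hpa hoddcount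
  refine ⟨?_, hS⟩
  rw [davC_eq_length_add_one _ hS fun T hT => ?_, Nat.add_sub_cancel]
  refine hasWZS_units_of_length_eq (Fin.cons 2 p) (Fin.cases Nat.prime_two hp)
    (Fin.cons_injective_iff.mpr ⟨fun ⟨i, hi⟩ => hpodd i hi, hinj⟩) (Fin.prod_cons 2 p) T ?_
  simpa using hT
end
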